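/- If p is delayed-simulated by q (p ⊑_de q) in a complete Büchi automaton A, then for every word α and every level i, if both (p,i) and (q,i) are vertices of the run DAG of A over α, then rank(p,i) ≤ ⌈rank(q,i)⌉_even, where ⌈x⌉_even denotes the smallest even number ≥ x for finite x and ⌈ω⌉_even = ω. -/

import Mathlib

open scoped Classical

universe u v

/-- A (nondeterministic) Büchi automaton. -/
structure BA (A : Type u) (Q : Type v) where
  δ : Q → A → Set Q
  I : Set Q
  F : Set Q

namespace BA

variable {A : Type u} {Q : Type v}

/-- Completeness: every state has a successor on every symbol. -/
def Complete (M : BA A Q) : Prop := ∀ q a, (M.δ q a).Nonempty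

/-- `ρ` is a run of `M` over the infinite word `α` (from `ρ 0`). -/
def IsRun (M : BA A Q) (α : ℕ → A) (ρ : ℕ → Q) : Prop :=
  ∀ i, ρ (i + 1) ∈ M.δ (ρ i) (α i)

/-- `M` accepts `α` from state `q` (some run from `q` visits `F` infinitely often). -/
def AcceptsFrom (M : BA A Q) (q : Q) (α : ℕ → A) : Prop :=
  ∃ ρ, ρ 0 = q ∧ M.IsRun α ρ ∧ ∀ n, ∃ m ≥ n, ρ m ∈ M.F

def LangFrom (M : BA A Q) (q : Q) : Set (ℕ → A) := {α | M.AcceptsFrom q α}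

def Lang (M : BA A Q) : Set (ℕ → A) := {α | ∃ q ∈ M.I, M.AcceptsFrom q α}

/-! ### Simulation games -/

/-- A (positional, total) Duplicator strategy: given Duplicator's current state and
Spoiler's transition `p →a p'`, pick Duplicator's next state, which must be an
`a`-successor of Duplicator's current state. -/
def IsStrategy (M : BA A Q) (σ : Q → Q → A → Q → Q) : Prop :=
  ∀ r p a p', σ r p a p' ∈ M.δ r a

/-- The trace produced by Duplicator following strategy `σ` from `r` against
Spoiler's trace `ρ` over the word `α`. -/
def play (σ : Q → Q → A → Q → Q) (r : Q) (α : ℕ → A) (ρ : ℕ → Q) : ℕ → Q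
  | 0 => r
  | i + 1 => σ (play σ r α ρ i) (ρ i) (α i) (ρ (i + 1))

/-- Direct-simulation winning condition. -/
def CondDi (M : BA A Q) (ρ τ : ℕ → Q) : Prop := ∀ i, ρ i ∈ M.F → τ i ∈ M.F

/-- Delayed-simulation winning condition. -/
def CondDe (M : BA A Q) (ρ τ : ℕ → Q) : Prop := ∀ i, ρ i ∈ M.F → ∃ k ≥ i, τ k ∈ M.F

/-- Fair-simulation winning condition. -/
def CondF (M : BA A Q) (ρ τ : ℕ → Q) : Prop :=
  (∀ n, ∃ m ≥ n, ρ m ∈ M.F) → (∀ n, ∃ m ≥ n, τ m ∈ M.F)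

/-- `σ` is winning for Duplicator from configuration `(p, q)` wrt condition `C`. -/
def WinsFrom (M : BA A Q) (C : (ℕ → Q) → (ℕ → Q) → Prop)
    (σ : Q → Q → A → Q → Q) (p q : Q) : Prop :=
  ∀ α ρ, ρ 0 = p → M.IsRun α ρ → C ρ (play σ q α ρ)

/-- The (maximal) simulation relation given by winning condition `C`. -/
def Sim (M : BA A Q) (C : (ℕ → Q) → (ℕ → Q) → Prop) (p q : Q) : Prop :=
  ∃ σ, M.IsStrategy σ ∧ M.WinsFrom C σ p q

def DiSim (M : BA A Q) : Q → Q → Prop := M.Sim M.CondDi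
def DeSim (M : BA A Q) : Q → Q → Prop := M.Sim M.CondDe
def FairSim (M : BA A Q) : Q → Q → Prop := M.Sim M.CondF

/-! ### Run DAGs and ranks -/

/-- Vertices of the run DAG of `M` over `α`. -/
def DagV (M : BA A Q) (α : ℕ → A) : Set (Q × ℕ) :=
  {v | ∃ ρ, ρ 0 ∈ M.I ∧ M.IsRun α ρ ∧ ρ v.2 = v.1}

/-- The edge relation of the run DAG. -/
def dagStep (M : BA A Q) (α : ℕ → A) (u v : Q × ℕ) : Prop :=
  v.2 = u.2 + 1 ∧ v.1 ∈ M.δ u.1 (α u.2)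

/-- Reachability inside a sub-DAG `G`. -/
def reachIn (M : BA A Q) (α : ℕ → A) (G : Set (Q × ℕ)) : Q × ℕ → Q × ℕ → Prop :=
  Relation.ReflTransGen (fun u v => u ∈ G ∧ v ∈ G ∧ M.dagStep α u v)

/-- A vertex of `G` is finite if it reaches only finitely many vertices inside `G`. -/
def FiniteIn (M : BA A Q) (α : ℕ → A) (G : Set (Q × ℕ)) (v : Q × ℕ) : Prop :=
  v ∈ G ∧ {u | M.reachIn α G v u}.Finite

/-- A vertex of `G` is endangered if it reaches no accepting vertex inside `G`. -/
def EndangeredIn (M : BA A Q) (α : ℕ → A) (G : Set (Q × ℕ)) (v : Q × ℕ) : Prop :=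
  v ∈ G ∧ ∀ u, M.reachIn α G v u → u.1 ∉ M.F

/-- The decreasing sequence of DAGs of the ranking procedure: at even steps remove
the finite vertices, at odd steps remove the endangered vertices. -/
def dagSeq (M : BA A Q) (α : ℕ → A) : ℕ → Set (Q × ℕ)
  | 0 => M.DagV α
  | j + 1 =>
      if Even j then M.dagSeq α j \ {v | M.FiniteIn α (M.dagSeq α j) v}
      else M.dagSeq α j \ {v | M.EndangeredIn α (M.dagSeq α j) v}

/-- The rank of a vertex: the step `j ≤ 2n` at which it is removed in the ranking
procedure, and `ω` (i.e. `⊤`) if it is never removed within `2n + 1` steps. -/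
noncomputable def rank (M : BA A Q) (α : ℕ → A) (n : ℕ) (v : Q × ℕ) : ℕ∞ :=
  if ∃ j ≤ 2 * n, v ∈ M.dagSeq α j ∧ v ∉ M.dagSeq α (j + 1) then
    ((sInf {j | v ∈ M.dagSeq α j ∧ v ∉ M.dagSeq α (j + 1)} : ℕ) : ℕ∞)
  else ⊤

end BA

/-! ### Schewe's rank-based complementation -/

/-- A macrostate `(S, O, f, i)` of the rank-based construction. -/
structure Macro (Q : Type v) where
  S : Set Q
  O : Set Q
  f : Q → ℕ
  i : ℕ

/-- The rank of a level ranking `f`: its maximal value. -/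
def rankOf {Q : Type v} [Fintype Q] (f : Q → ℕ) : ℕ := Finset.univ.sup f

/-- The smallest even number `≥ k`. -/
def rondNat (k : ℕ) : ℕ := if Even k then k else k + 1

/-- The smallest even number `≥ x`, with `⌈ω⌉ = ω`. -/
def rondE (x : ℕ∞) : ℕ∞ := WithTop.map rondNat x

namespace BA

variable {A : Type u} {Q : Type v}

/-- A level ranking: ranks bounded by `2n`, accepting states get even ranks. -/
def LevelRanking (M : BA A Q) (n : ℕ) (f : Q → ℕ) : Prop :=
  (∀ q, f q ≤ 2 * n) ∧ ∀ q ∈ M.F, Even (f q)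

/-- `f` is `S`-tight. -/
def STight [Fintype Q] (M : BA A Q) (n : ℕ) (S : Set Q) (f : Q → ℕ) : Prop :=
  M.LevelRanking n f ∧ Odd (rankOf f) ∧
  (∀ m, Odd m → m ≤ rankOf f → ∃ s ∈ S, f s = m) ∧
  ∀ q ∉ S, f q = 0

/-- Successors of a set of states. -/
def δSet (M : BA A Q) (S : Set Q) (a : A) : Set Q := ⋃ q ∈ S, M.δ q a

/-- Validity of a macrostate, i.e., membership in `Q₂`. -/
def Q2Valid [Fintype Q] (M : BA A Q) (n : ℕ) (m : Macro Q) : Prop :=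
  M.STight n m.S m.f ∧ m.O ⊆ m.S ∩ {q | m.f q = m.i} ∧ Even m.i ∧ m.i + 2 ≤ 2 * n

/-- The `δ₃` successor condition of the rank-based construction, where `cl` is the
closure operator applied to the successor set (use `cl = id` for the plain
construction). -/
def macroSucc [Fintype Q] (M : BA A Q) (cl : Set Q → Set Q) (m m' : Macro Q)
    (a : A) : Prop :=
  m'.S = cl (M.δSet m.S a) ∧
  (∀ q ∈ m.S, ∀ q' ∈ M.δ q a, m'.f q' ≤ m.f q) ∧
  rankOf m'.f = rankOf m.f ∧
  ((m.O = ∅ ∧ m'.i = (m.i + 2) % (rankOf m'.f + 1) ∧ m'.O = {q | m'.f q = m'.i}) ∨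
   (m.O ≠ ∅ ∧ m'.i = m.i ∧ m'.O = M.δSet m.O a ∩ {q | m'.f q = m'.i}))

/-- Schewe's rank-based complement construction, parameterized by a predicate
`keep` selecting which macrostates of `Q₂` are kept (use `fun _ => True` for the
plain construction) and a closure `cl` applied to successor sets (use `id` for
the plain construction). -/
def schewe [Fintype Q] (M : BA A Q) (n : ℕ) (keep : Macro Q → Prop)
    (cl : Set Q → Set Q) : BA A (Set Q ⊕ Macro Q) where
  δ := fun s a =>
    match s with
    | Sum.inl S =>
        {Sum.inl (cl (M.δSet S a))} ∪
        {s' | ∃ m : Macro Q, s' = Sum.inr m ∧ m.S = cl (M.δSet S a) ∧ m.O = ∅ ∧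
              m.i = 0 ∧ M.Q2Valid n m ∧ keep m}
    | Sum.inr m =>
        {s' | ∃ m' : Macro Q, s' = Sum.inr m' ∧ M.macroSucc cl m m' a ∧
              M.Q2Valid n m' ∧ keep m'}
  I := {Sum.inl M.I}
  F := {Sum.inl (∅ : Set Q)} ∪
       {s | ∃ m : Macro Q, s = Sum.inr m ∧ m.O = ∅ ∧ M.Q2Valid n m ∧ keep m}

/-! ### Finite paths, quotients, added transitions -/

/-- Finite path from `p` to `q` over the finite word `w`. -/
inductive Path (M : BA A Q) : Q → List A → Q → Prop
  | nil (q : Q) : Path M q [] q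
  | cons {p q r : Q} {a : A} {w : List A} :
      q ∈ M.δ p a → Path M q w r → Path M p (a :: w) r

/-- Finite path from `p` to `q` over `w` that visits an accepting state. -/
inductive APath (M : BA A Q) : Q → List A → Q → Prop
  | here {p : Q} {w : List A} {q : Q} : p ∈ M.F → Path M p w q → APath M p w q
  | step {p q r : Q} {a : A} {w : List A} :
      q ∈ M.δ p a → APath M q w r → APath M p (a :: w) r

/-- The factor of the infinite word `α` between positions `i` (included) and
`j` (excluded). -/
def wordSeg (α : ℕ → A) (i j : ℕ) : List A := (List.range (j - i)).map fun m => α (i + m)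

/-- `α` belongs to the ω-power `L^ω` of the language `L` of finite words. -/
def InOmegaPow (L : Language A) (α : ℕ → A) : Prop :=
  ∃ t : ℕ → ℕ, t 0 = 0 ∧ StrictMono t ∧ ∀ k, wordSeg α (t k) (t (k + 1)) ∈ L

/-- The automaton `M` with the extra transition `r →a p` added. -/
def addTr (M : BA A Q) (r : Q) (a : A) (p : Q) : BA A Q where
  δ := fun s b => M.δ s b ∪ {x | s = r ∧ b = a ∧ x = p}
  I := M.I
  F := M.F

/-- The quotient automaton of `M` by the equivalence (setoid) `s`. -/
def quotBA (M : BA A Q) (s : Setoid Q) : BA A (Quotient s) where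
  δ := fun c a => {c' | ∃ u u', Quotient.mk s u = c ∧ Quotient.mk s u' = c' ∧ u' ∈ M.δ u a}
  I := {c | ∃ u ∈ M.I, Quotient.mk s u = c}
  F := {c | ∃ u ∈ M.F, Quotient.mk s u = c}

end BA

/-!
Call a sub-DAG `G` of the run DAG closed under delayed simulation if `p ⊑_de q`, `(p, i) ∈ G` and
`(q, i) ∈ DagV` imply `(q, i) ∈ G`. Delayed simulation persists along a play: from any position
`(ρ m, τ m)` of a winning play Duplicator still wins. Hence, if `G` is closed, Duplicator answers
an infinite path of `G` from `(p, i)` by an infinite path of `G` from `(q, i)`, which visits `F`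
after every visit of the former. So removing the finite vertices of `G`, or the endangered
vertices of `G` when `G` has no dead ends, keeps `G` closed, and every DAG of the ranking procedure
is closed. Thus `(q, i)` survives every step `(p, i)` survives, and `rank (p, i) ≤ rank (q, i)`,
which is at most `⌈rank (q, i)⌉_even`.
-/

namespace BA

variable {A : Type u} {Q : Type v} {M : BA A Q}

theorem IsStrategy.isRun_play {σ : Q → Q → A → Q → Q} (hσ : M.IsStrategy σ) (q : Q)
    (α : ℕ → A) (ρ : ℕ → Q) : M.IsRun α (play σ q α ρ) :=
  fun _ => hσ _ _ _ _

theorem play_cons (σ : Q → Q → A → Q → Q) (q p : Q) (a : A) (β : ℕ → A) (ρ : ℕ → Q) (m : ℕ) :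
    play σ q (Stream'.cons a β) (Stream'.cons p ρ) (m + 1) = play σ (σ q p a (ρ 0)) β ρ m := by
  induction m with
  | zero => rfl
  | succ m ih => exact congrArg (fun r => σ r (ρ m) (β m) (ρ (m + 1))) ih

theorem WinsFrom.step {σ : Q → Q → A → Q → Q} {p q p' : Q} {a : A}
    (hw : M.WinsFrom M.CondDe σ p q) (hp' : p' ∈ M.δ p a) :
    M.WinsFrom M.CondDe σ p' (σ q p a p') := by
  intro β ρ hρ0 hρ i hi
  have hrun : M.IsRun (Stream'.cons a β) (Stream'.cons p ρ) := by
    rintro (_ | m)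
    · exact show ρ 0 ∈ M.δ p a from hρ0 ▸ hp'
    · exact hρ m
  obtain ⟨k, hk, hkF⟩ := hw _ _ rfl hrun (i + 1) hi
  obtain ⟨k, rfl⟩ : ∃ k', k = k' + 1 := ⟨k - 1, by omega⟩
  refine ⟨k, by omega, ?_⟩
  rwa [play_cons, hρ0] at hkF

theorem WinsFrom.along_play {σ : Q → Q → A → Q → Q} {p q : Q}
    (hw : M.WinsFrom M.CondDe σ p q) {α : ℕ → A} {ρ : ℕ → Q} (hρ0 : ρ 0 = p)
    (hρ : M.IsRun α ρ) (m : ℕ) : M.WinsFrom M.CondDe σ (ρ m) (play σ q α ρ m) := by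
  induction m with
  | zero => rwa [hρ0]
  | succ m ih => exact ih.step (hρ m)

variable {α : ℕ → A}

theorem mem_dagV_of_isRun {q : Q} {i : ℕ} (hq : (q, i) ∈ M.DagV α) {τ : ℕ → Q}
    (hτ0 : τ 0 = q) (hτ : M.IsRun (fun m => α (i + m)) τ) (m : ℕ) :
    (τ m, i + m) ∈ M.DagV α := by
  obtain ⟨ρ, hρI, hρ, hρi : ρ i = q⟩ := hq
  refine ⟨fun t => if t < i then ρ t else τ (t - i), ?_, fun t => ?_, by simp⟩
  · rcases Nat.eq_zero_or_pos i with rfl | hi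
    · simpa [hτ0, ← hρi] using hρI
    · simpa [hi] using hρI
  · rcases lt_trichotomy (t + 1) i with ht | rfl | ht
    · simpa [ht, (by omega : t < i)] using hρ t
    · simpa [hτ0, ← hρi] using hρ t
    · have := hτ (t - i)
      beta_reduce
      rw [if_neg (by omega : ¬ t + 1 < i), if_neg (by omega : ¬ t < i),
        (by omega : t + 1 - i = t - i + 1)]
      simpa [(by omega : i + (t - i) = t)] using this

variable (M α) in
def IsPathIn (G : Set (Q × ℕ)) (i : ℕ) (τ : ℕ → Q) : Prop :=
  M.IsRun (fun m => α (i + m)) τ ∧ ∀ m, (τ m, i + m) ∈ G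

variable {G H : Set (Q × ℕ)} {i : ℕ} {τ : ℕ → Q}

theorem IsPathIn.mono (h : M.IsPathIn α G i τ) (hGH : G ⊆ H) : M.IsPathIn α H i τ :=
  ⟨h.1, fun m => hGH (h.2 m)⟩

theorem IsPathIn.reachIn (h : M.IsPathIn α G i τ) (m : ℕ) :
    M.reachIn α G (τ 0, i) (τ m, i + m) := by
  induction m with
  | zero => exact Relation.ReflTransGen.refl
  | succ m ih => exact ih.tail ⟨h.2 m, h.2 (m + 1), rfl, h.1 m⟩

theorem IsPathIn.not_finiteIn (h : M.IsPathIn α G i τ) : ¬ M.FiniteIn α G (τ 0, i) := by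
  have hinj : Function.Injective fun m => (τ m, i + m) := fun m m' hm => by
    simpa using congrArg Prod.snd hm
  exact fun hfin => Set.infinite_of_injective_forall_mem hinj h.reachIn hfin.2

theorem IsPathIn.cons {v : Q × ℕ} (hv : v ∈ G) (hτ0 : τ 0 ∈ M.δ v.1 (α v.2))
    (h : M.IsPathIn α G (v.2 + 1) τ) : M.IsPathIn α G v.2 (Stream'.cons v.1 τ) := by
  refine ⟨?_, ?_⟩
  · rintro (_ | m)
    · exact hτ0
    · show τ (m + 1) ∈ M.δ (τ m) (α (v.2 + (m + 1)))
      rw [← add_assoc, add_right_comm]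
      exact h.1 m
  · rintro (_ | m)
    · exact hv
    · show (τ m, v.2 + (m + 1)) ∈ G
      rw [← add_assoc, add_right_comm]
      exact h.2 m

theorem reachIn.mem_of_mem {v u : Q × ℕ} (h : M.reachIn α G v u) (hv : v ∈ G) : u ∈ G := by
  induction h with
  | refl => exact hv
  | tail _ hstep _ => exact hstep.2.1

theorem reachIn.exists_isPathIn {v u : Q × ℕ} (h : M.reachIn α G v u) (hτ0 : τ 0 = u.1)
    (hτ : M.IsPathIn α G u.2 τ) :
    ∃ ρ : ℕ → Q, ∃ L, ρ 0 = v.1 ∧ ρ L = u.1 ∧ M.IsPathIn α G v.2 ρ := by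
  induction h using Relation.ReflTransGen.head_induction_on with
  | refl => exact ⟨τ, 0, hτ0, hτ0, hτ⟩
  | head hstep _ ih =>
    obtain ⟨hv, -, hlevel, hδ⟩ := hstep
    obtain ⟨ρ, L, hρ0, hρL, hρ⟩ := ih
    refine ⟨Stream'.cons _ ρ, L + 1, rfl, hρL, IsPathIn.cons hv (hρ0 ▸ hδ) ?_⟩
    rwa [← hlevel]

theorem exists_isPathIn_of_forall_exists_dagStep (hG : ∀ v ∈ G, ∃ w ∈ G, M.dagStep α v w)
    {v : Q × ℕ} (hv : v ∈ G) : ∃ τ, τ 0 = v.1 ∧ M.IsPathIn α G v.2 τ := by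
  choose next hnext using fun w : G => hG w w.2
  let f : ℕ → G := fun m => (fun w => ⟨next w, (hnext w).1⟩)^[m] ⟨v, hv⟩
  have hf : ∀ m, f (m + 1) = ⟨next (f m), (hnext (f m)).1⟩ := fun m =>
    Function.iterate_succ_apply' _ m _
  have hlevel : ∀ m, (f m).1.2 = v.2 + m := by
    intro m
    induction m with
    | zero => rfl
    | succ m ih => rw [hf, (hnext (f m)).2.1, ih, add_assoc]
  refine ⟨fun m => (f m).1.1, rfl, fun m => ?_, fun m => ?_⟩
  · show (f (m + 1)).1.1 ∈ M.δ (f m).1.1 (α (v.2 + m))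
    rw [hf, ← hlevel]
    exact (hnext (f m)).2.2
  · show ((f m).1.1, v.2 + m) ∈ G
    rw [← hlevel]
    exact (f m).2

theorem exists_dagStep_mem_diff_finiteIn [Finite Q] {v : Q × ℕ}
    (hv : v ∈ G \ {w | M.FiniteIn α G w}) :
    ∃ w ∈ G \ {w | M.FiniteIn α G w}, M.dagStep α v w := by
  by_contra! hsucc
  let succs := {w | w ∈ G ∧ M.dagStep α v w}
  have hsuccs : succs.Finite :=
    (Set.finite_range fun q : Q => (q, v.2 + 1)).subset fun w hw => ⟨w.1, Prod.ext rfl hw.2.1.symm⟩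
  have hreach : {u | M.reachIn α G v u} ⊆ insert v (⋃ w ∈ succs, {u | M.reachIn α G w u}) := by
    intro u hu
    rcases Relation.ReflTransGen.cases_head hu with rfl | ⟨w, ⟨-, hw, hvw⟩, hwu⟩
    · exact Set.mem_insert _ _
    · exact Set.mem_insert_of_mem _ (Set.mem_biUnion ⟨hw, hvw⟩ hwu)
  refine hv.2 ⟨hv.1, ((hsuccs.biUnion fun w hw => ?_).insert v).subset hreach⟩
  by_contra hinf
  exact hsucc w ⟨hw.1, fun h => hinf h.2⟩ hw.2

variable (M α) in
def DeSimClosed (G : Set (Q × ℕ)) : Prop :=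
  ∀ ⦃p q i⦄, M.DeSim p q → (q, i) ∈ M.DagV α → (p, i) ∈ G → (q, i) ∈ G

theorem DeSimClosed.exists_isPathIn (hG : M.DeSimClosed α G) {p q : Q} (hpq : M.DeSim p q)
    (hq : (q, i) ∈ M.DagV α) {ρ : ℕ → Q} (hρ0 : ρ 0 = p) (hρ : M.IsPathIn α G i ρ) :
    ∃ τ, τ 0 = q ∧ M.IsPathIn α G i τ ∧ M.CondDe ρ τ := by
  obtain ⟨σ, hσ, hw⟩ := hpq
  have hrun := hσ.isRun_play q (fun m => α (i + m)) ρ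
  refine ⟨play σ q _ ρ, rfl, ⟨hrun, fun m => ?_⟩, hw _ _ hρ0 hρ.1⟩
  exact hG ⟨σ, hσ, hw.along_play hρ0 hρ.1 m⟩ (mem_dagV_of_isRun hq rfl hrun m) (hρ.2 m)

theorem DeSimClosed.diff_finiteIn [Finite Q] (hG : M.DeSimClosed α G) :
    M.DeSimClosed α (G \ {v | M.FiniteIn α G v}) := by
  intro p q i hpq hq ⟨hpG, hp⟩
  obtain ⟨ρ, hρ0, hρ⟩ :=
    exists_isPathIn_of_forall_exists_dagStep (fun _ => exists_dagStep_mem_diff_finiteIn) ⟨hpG, hp⟩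
  obtain ⟨τ, rfl, hτ, -⟩ := hG.exists_isPathIn hpq hq hρ0 (hρ.mono Set.sdiff_subset)
  exact ⟨hτ.2 0, hτ.not_finiteIn⟩

theorem DeSimClosed.diff_endangeredIn (hG : M.DeSimClosed α G)
    (hsucc : ∀ v ∈ G, ∃ w ∈ G, M.dagStep α v w) :
    M.DeSimClosed α (G \ {v | M.EndangeredIn α G v}) := by
  intro p q i hpq hq ⟨hpG, hp⟩
  obtain ⟨u, hpu, huF⟩ : ∃ u, M.reachIn α G (p, i) u ∧ u.1 ∈ M.F := by
    by_contra! h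
    exact hp ⟨hpG, h⟩
  obtain ⟨τu, hτu0, hτu⟩ := exists_isPathIn_of_forall_exists_dagStep hsucc (hpu.mem_of_mem hpG)
  obtain ⟨ρ, L, hρ0, hρL, hρ⟩ := hpu.exists_isPathIn hτu0 hτu
  obtain ⟨τ, rfl, hτ, hcond⟩ := hG.exists_isPathIn hpq hq hρ0 hρ
  obtain ⟨k, -, hkF⟩ := hcond L (hρL ▸ huF)
  exact ⟨hτ.2 0, fun hend => hend.2 _ (hτ.reachIn k) hkF⟩

theorem dagSeq_succ_subset (j : ℕ) : M.dagSeq α (j + 1) ⊆ M.dagSeq α j := by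
  rw [dagSeq]
  split_ifs <;> exact Set.sdiff_subset

theorem dagSeq_antitone : Antitone (M.dagSeq α) :=
  antitone_nat_of_succ_le dagSeq_succ_subset

theorem deSimClosed_dagSeq [Finite Q] (j : ℕ) : M.DeSimClosed α (M.dagSeq α j) := by
  induction j with
  | zero => exact fun _ _ _ _ hq _ => hq
  | succ j ih =>
    rw [dagSeq]
    split_ifs with hj
    · exact ih.diff_finiteIn
    · obtain ⟨j, rfl⟩ : ∃ j', j = j' + 1 :=
        Nat.exists_eq_succ_of_ne_zero (by rintro rfl; exact hj Even.zero)
      refine ih.diff_endangeredIn fun v hv => ?_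
      rw [dagSeq, if_pos (by simpa [Nat.even_add_one] using hj)] at hv ⊢
      exact exists_dagStep_mem_diff_finiteIn hv

theorem rank_eq_of_mem_dagSeq {n j : ℕ} {v : Q × ℕ} (hjn : j ≤ 2 * n) (hj : v ∈ M.dagSeq α j)
    (hj1 : v ∉ M.dagSeq α (j + 1)) : M.rank α n v = j := by
  have hdrop : {j' | v ∈ M.dagSeq α j' ∧ v ∉ M.dagSeq α (j' + 1)} = {j} := by
    ext j'
    refine ⟨fun ⟨h, h1⟩ => ?_, fun h => h ▸ ⟨hj, hj1⟩⟩
    by_contra hne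
    rcases Nat.lt_or_gt_of_ne hne with hlt | hlt
    · exact h1 (dagSeq_antitone hlt hj)
    · exact hj1 (dagSeq_antitone hlt h)
  rw [rank, if_pos ⟨j, hjn, hj, hj1⟩, hdrop, csInf_singleton]

theorem exists_mem_dagSeq_not_mem_succ {v : Q × ℕ} (hv : v ∈ M.dagSeq α 0) {m : ℕ}
    (hm : v ∉ M.dagSeq α (m + 1)) : ∃ j ≤ m, v ∈ M.dagSeq α j ∧ v ∉ M.dagSeq α (j + 1) := by
  induction m with
  | zero => exact ⟨0, le_rfl, hv, hm⟩
  | succ m ih =>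
    by_cases hm' : v ∈ M.dagSeq α (m + 1)
    · exact ⟨m + 1, le_rfl, hm', hm⟩
    · obtain ⟨j, hj, h⟩ := ih hm'
      exact ⟨j, hj.trans m.le_succ, h⟩

theorem rank_le_rank_of_deSim [Finite Q] {p q : Q} {i : ℕ} (n : ℕ) (hpq : M.DeSim p q)
    (hp : (p, i) ∈ M.DagV α) (hq : (q, i) ∈ M.DagV α) :
    M.rank α n (p, i) ≤ M.rank α n (q, i) := by
  by_cases hdrop : ∃ j ≤ 2 * n, (q, i) ∈ M.dagSeq α j ∧ (q, i) ∉ M.dagSeq α (j + 1)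
  · obtain ⟨j, hjn, hj, hj1⟩ := hdrop
    have hp1 : (p, i) ∉ M.dagSeq α (j + 1) := fun h => hj1 (deSimClosed_dagSeq _ hpq hq h)
    obtain ⟨j', hj'j, hj', hj'1⟩ := exists_mem_dagSeq_not_mem_succ hp hp1
    rw [rank_eq_of_mem_dagSeq hjn hj hj1, rank_eq_of_mem_dagSeq (hj'j.trans hjn) hj' hj'1]
    exact_mod_cast hj'j
  · have hrank : M.rank α n (q, i) = ⊤ := if_neg hdrop
    exact hrank ▸ le_top

end BA

theorem le_rondNat (k : ℕ) : k ≤ rondNat k := by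
  unfold rondNat
  split_ifs <;> omega

theorem le_rondE (x : ℕ∞) : x ≤ rondE x := by
  cases x with
  | top => exact le_top
  | coe k => exact WithTop.coe_le_coe.2 (le_rondNat k)

theorem stmt4_general {A : Type u} {Q : Type v} [Fintype Q] (M : BA A Q) (n : ℕ)
    (p q : Q) (h : M.DeSim p q) :
    ∀ (α : ℕ → A) (i : ℕ), (p, i) ∈ M.DagV α → (q, i) ∈ M.DagV α →
      M.rank α n (p, i) ≤ rondE (M.rank α n (q, i)) :=
  fun _ _ hp hq => (BA.rank_le_rank_of_deSim n h hp hq).trans (le_rondE _)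

/-- delayed simulation implies `rank(p,i) ≤ ⌈rank(q,i)⌉_even`. -/
theorem stmt4 {A : Type u} {Q : Type v} [Fintype Q] (M : BA A Q)
    (hM : M.Complete) (n : ℕ) (hn : n = Fintype.card Q)
    (p q : Q) (h : M.DeSim p q) :
    ∀ (α : ℕ → A) (i : ℕ), (p, i) ∈ M.DagV α → (q, i) ∈ M.DagV α →
      M.rank α n (p, i) ≤ rondE (M.rank α n (q, i)) :=
  stmt4_general M n p q h
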